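/- For every integer h ≥ 3, the persistent reversible pebbling number of the complete binary tree of height h satisfies rev(Bt_h) ≥ h + 2. -/

import Mathlib

/-- A system for pebbling: a finite directed tree given by a root and a parent
function (edges are directed from each non-root vertex to its parent, i.e.
toward the root). -/
structure PebSys (V : Type) where
  root : V
  parent : V → V

/-- `T` is a genuine rooted directed tree: the root is a fixed point of the
parent map and every vertex reaches the root by iterating the parent map. -/
def IsRDTree {V : Type} [Fintype V] (T : PebSys V) : Prop :=
  T.parent T.root = T.root ∧ ∀ v : V, ∃ k : ℕ, T.parent^[k] v = T.root

/-- One legal move of the reversible pebble game, from configuration `P` to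
configuration `Q`: exactly one vertex `v` is pebbled or unpebbled, and all
in-neighbours of `v` (vertices `u ≠ v` with `parent u = v`) carry pebbles
in `P`. -/
def PebStep {V : Type} [DecidableEq V] (T : PebSys V) (P Q : Finset V) : Prop :=
  ∃ v : V, ((v ∉ P ∧ Q = insert v P) ∨ (v ∉ Q ∧ P = insert v Q)) ∧
    ∀ u : V, u ≠ v → T.parent u = v → u ∈ P

/-- A persistent reversible pebbling: starts with no pebbles, ends with a
pebble exactly on the root, consecutive configurations are legal moves. -/
def IsPebbling {V : Type} [DecidableEq V] (T : PebSys V) (L : List (Finset V)) : Prop :=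
  L.head? = some ∅ ∧ L.getLast? = some {T.root} ∧ L.Chain' (PebStep T)

/-- A visiting reversible pebbling: starts and ends with no pebbles, and the
root carries a pebble at some point. -/
def IsVisPebbling {V : Type} [DecidableEq V] (T : PebSys V) (L : List (Finset V)) : Prop :=
  L.head? = some ∅ ∧ L.getLast? = some ∅ ∧ (∃ P ∈ L, T.root ∈ P) ∧ L.Chain' (PebStep T)

/-- The space of a pebbling: the maximum number of pebbles in any configuration. -/
def pebSpace {V : Type} (L : List (Finset V)) : ℕ := (L.map Finset.card).foldr max 0

/-- The persistent reversible pebbling number `rev`. -/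
noncomputable def revNum {V : Type} [DecidableEq V] (T : PebSys V) : ℕ :=
  sInf {k | ∃ L : List (Finset V), IsPebbling T L ∧ pebSpace L ≤ k}

/-- The visiting reversible pebbling number `vrev`. -/
noncomputable def vrevNum {V : Type} [DecidableEq V] (T : PebSys V) : ℕ :=
  sInf {k | ∃ L : List (Finset V), IsVisPebbling T L ∧ pebSpace L ≤ k}

/-- The complete binary tree of height `h` (every root-to-leaf path has `h`
nodes), on the `2 ^ h - 1` vertices `0, …, 2 ^ h - 2` in heap order: the root
is `0` and the parent of vertex `i > 0` is `(i - 1) / 2`; all edges are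
directed toward the root. -/
def BtSys (h : ℕ) (hpos : 0 < 2 ^ h - 1) : PebSys (Fin (2 ^ h - 1)) where
  root := ⟨0, hpos⟩
  parent := fun i =>
    ⟨(i.val - 1) / 2, lt_of_le_of_lt (le_trans (Nat.div_le_self _ _) (Nat.sub_le _ _)) i.isLt⟩


/-!
Read the pebbling backwards: it starts with a pebble on the root alone and ends empty.
Say that `x` costs at least `n` if, whenever `x` gets pebbled after a moment at which its
subtree is empty, the subtree carries `n` pebbles at some moment in between. Just before `x` is
pebbled both of its children carry pebbles. Take the child whose subtree was empty most
recently: while it is pebbled again from that moment on, the other child subtree is never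
empty. So if both children cost `n ≥ 1`, then `x` costs `n + 1`; a vertex of height `2` costs
`3`, hence one of height `j ≥ 2` costs `j + 1`. Just before the root is first unpebbled it has
carried a pebble all along and both children carry pebbles, and the same argument gives `h`
pebbles in one child subtree, one in the other, and the root.
-/

theorem Nat.exists_last_of_le {p : ℕ → Prop} {s t : ℕ} (hst : s ≤ t) (hs : p s) :
    ∃ σ, s ≤ σ ∧ σ ≤ t ∧ p σ ∧ ∀ τ, σ < τ → τ ≤ t → ¬ p τ := by
  classical
  let q i := s ≤ i ∧ p i
  have hq : q s := ⟨le_rfl, hs⟩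
  have hsσ : s ≤ Nat.findGreatest q t := Nat.le_findGreatest hst hq
  exact ⟨_, hsσ, Nat.findGreatest_le t, (Nat.findGreatest_spec hst hq).2,
    fun τ hστ hτt hτ => Nat.findGreatest_is_greatest hστ hτt ⟨by omega, hτ⟩⟩

theorem Nat.exists_first_of_le {p : ℕ → Prop} {s t : ℕ} (hst : s ≤ t) (hs : ¬ p s) (ht : p t) :
    ∃ r, s ≤ r ∧ r < t ∧ (∀ i, s ≤ i → i ≤ r → ¬ p i) ∧ p (r + 1) := by
  classical
  have hex : ∃ k, p (s + k) := ⟨t - s, by rwa [Nat.add_sub_cancel' hst]⟩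
  have hpos : 0 < Nat.find hex :=
    Nat.pos_of_ne_zero fun h0 => hs (by simpa [h0] using Nat.find_spec hex)
  refine ⟨s + (Nat.find hex - 1), by omega, ?_, fun i hsi hir hi => ?_, ?_⟩
  · have := Nat.find_min' hex (m := t - s) (by rwa [Nat.add_sub_cancel' hst])
    omega
  · exact Nat.find_min hex (m := i - s) (by omega) (by rwa [Nat.add_sub_cancel' hsi])
  · simpa [show s + (Nat.find hex - 1) + 1 = s + Nat.find hex by omega] using Nat.find_spec hex

namespace PebSys

variable {V : Type} (T : PebSys V)

def IsBelow (v x : V) : Prop := ∃ k, T.parent^[k] v = x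

structure IsFork (x y₁ y₂ : V) : Prop where
  parent_left : T.parent y₁ = x
  parent_right : T.parent y₂ = x
  left_ne : y₁ ≠ x
  right_ne : y₂ ≠ x
  disjoint : ∀ v, T.IsBelow v y₁ → ¬ T.IsBelow v y₂

def CostsAtLeast (Q : ℕ → Finset V) (x : V) (n : ℕ) : Prop :=
  ∀ s t, s ≤ t → (∀ v ∈ Q s, ¬ T.IsBelow v x) → x ∈ Q t →
    ∃ τ, s ≤ τ ∧ τ ≤ t ∧ ∃ S ⊆ Q τ, (∀ v ∈ S, T.IsBelow v x) ∧ n ≤ S.card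

-- Runs may stand still, so that a finite pebbling padded with its final configuration is one.
def IsRun [DecidableEq V] (Q : ℕ → Finset V) : Prop :=
  ∀ i, Q i = Q (i + 1) ∨ PebStep T (Q i) (Q (i + 1))

variable {T}

theorem IsBelow.refl (v : V) : T.IsBelow v v := ⟨0, rfl⟩

theorem IsBelow.trans_parent {v y x : V} (hv : T.IsBelow v y) (hy : T.parent y = x) :
    T.IsBelow v x := by
  obtain ⟨k, rfl⟩ := hv
  exact ⟨k + 1, by rw [Function.iterate_succ_apply', hy]⟩

theorem IsBelow.total {v a b : V} (ha : T.IsBelow v a) (hb : T.IsBelow v b) :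
    T.IsBelow a b ∨ T.IsBelow b a := by
  obtain ⟨k, rfl⟩ := ha
  obtain ⟨l, rfl⟩ := hb
  rcases le_total k l with hkl | hlk
  · exact .inl ⟨l - k, by rw [← Function.iterate_add_apply, Nat.sub_add_cancel hkl]⟩
  · exact .inr ⟨k - l, by rw [← Function.iterate_add_apply, Nat.sub_add_cancel hlk]⟩

theorem IsBelow.eq_or_parent {a b : V} (h : T.IsBelow a b) :
    a = b ∨ T.IsBelow (T.parent a) b := by
  obtain ⟨_ | k, rfl⟩ := h
  · exact .inl rfl
  · exact .inr ⟨k, (Function.iterate_succ_apply _ _ _).symm⟩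

theorem IsBelow.le [Preorder V] (hle : ∀ u, T.parent u ≤ u) {v x : V} (h : T.IsBelow v x) :
    x ≤ v := by
  obtain ⟨k, rfl⟩ := h
  induction k with
  | zero => exact le_rfl
  | succ k ih => exact (Function.iterate_succ_apply' T.parent k v ▸ hle _).trans ih

theorem not_isBelow_root (hroot : T.parent T.root = T.root) {c : V} (hc : c ≠ T.root) :
    ¬ T.IsBelow T.root c := by
  rintro ⟨k, hk⟩
  rw [Function.iterate_fixed hroot] at hk
  exact hc hk.symm

theorem not_isBelow_of_siblings {x y₁ y₂ v : V} (hy : y₁ ≠ y₂) (h₁ : T.parent y₁ = x)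
    (h₂ : T.parent y₂ = x) (hx₁ : ¬ T.IsBelow x y₁) (hx₂ : ¬ T.IsBelow x y₂)
    (hv₁ : T.IsBelow v y₁) : ¬ T.IsBelow v y₂ := fun hv₂ => by
  rcases hv₁.total hv₂ with h | h
  · rcases h.eq_or_parent with rfl | h
    · exact hy rfl
    · exact hx₂ (h₁ ▸ h)
  · rcases h.eq_or_parent with rfl | h
    · exact hy rfl
    · exact hx₁ (h₂ ▸ h)

theorem IsFork.left_ne_right {x y₁ y₂ : V} (hf : T.IsFork x y₁ y₂) : y₁ ≠ y₂ :=
  fun h => hf.disjoint y₁ (IsBelow.refl y₁) (h ▸ IsBelow.refl y₁)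

end PebSys

section Steps

variable {V : Type} [DecidableEq V] {T : PebSys V}

theorem PebStep.symm {P Q : Finset V} (h : PebStep T P Q) : PebStep T Q P := by
  obtain ⟨v, hmove | hmove, hch⟩ := h
  · obtain ⟨hv, rfl⟩ := hmove
    exact ⟨v, .inr ⟨hv, rfl⟩, fun u hu hp => Finset.mem_insert_of_mem (hch u hu hp)⟩
  · obtain ⟨hv, rfl⟩ := hmove
    exact ⟨v, .inl ⟨hv, rfl⟩,
      fun u hu hp => (Finset.mem_insert.mp (hch u hu hp)).resolve_left hu⟩

theorem PebStep.of_insert {P : Finset V} {v : V} (hv : v ∉ P)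
    (hch : ∀ u, u ≠ v → T.parent u = v → u ∈ P) : PebStep T P (insert v P) :=
  ⟨v, .inl ⟨hv, rfl⟩, hch⟩

end Steps

namespace PebSys

variable {V : Type} [DecidableEq V] {T : PebSys V} {Q : ℕ → Finset V}

theorem IsRun.mem_of_flip (hQ : T.IsRun Q) {r : ℕ} {x : V}
    (hx : x ∈ Q r ↔ x ∉ Q (r + 1)) :
    (∀ u, u ≠ x → (u ∈ Q r ↔ u ∈ Q (r + 1))) ∧ ∀ u, u ≠ x → T.parent u = x → u ∈ Q r := by
  obtain ⟨v, hmove, hch⟩ := (hQ r).resolve_left fun h => by simp [h] at hx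
  have hvx : v = x := by
    rcases hmove with ⟨hv, hQv⟩ | ⟨hv, hQv⟩ <;> rw [hQv] at hx <;> by_contra hne <;>
      simp [Finset.mem_insert, Ne.symm hne] at hx
  subst hvx
  refine ⟨fun u hu => ?_, hch⟩
  rcases hmove with ⟨-, hQv⟩ | ⟨-, hQv⟩ <;> simp [hQv, hu]

theorem exists_card_ge_of_siblings {y₁ y₂ : V} {n : ℕ} (h₁ : T.CostsAtLeast Q y₁ n)
    (h₂ : T.CostsAtLeast Q y₂ n) (hn : 1 ≤ n) (hdisj : ∀ v, T.IsBelow v y₁ → ¬ T.IsBelow v y₂)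
    {s t : ℕ} (hst : s ≤ t) (hs₁ : ∀ v ∈ Q s, ¬ T.IsBelow v y₁)
    (hs₂ : ∀ v ∈ Q s, ¬ T.IsBelow v y₂) (ht₁ : y₁ ∈ Q t) (ht₂ : y₂ ∈ Q t) :
    ∃ τ, s ≤ τ ∧ τ ≤ t ∧
      ∃ S ⊆ Q τ, (∀ v ∈ S, T.IsBelow v y₁ ∨ T.IsBelow v y₂) ∧ n + 1 ≤ S.card := by
  obtain ⟨σ₁, hsσ₁, hσ₁t, hσ₁, hlast₁⟩ :=
    Nat.exists_last_of_le (p := fun i => ∀ v ∈ Q i, ¬ T.IsBelow v y₁) hst hs₁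
  obtain ⟨σ₂, hsσ₂, hσ₂t, hσ₂, hlast₂⟩ :=
    Nat.exists_last_of_le (p := fun i => ∀ v ∈ Q i, ¬ T.IsBelow v y₂) hst hs₂
  wlog h12 : σ₁ ≤ σ₂ generalizing y₁ y₂ σ₁ σ₂
  · obtain ⟨τ, hsτ, hτt, S, hSQ, hS, hcard⟩ := this h₂ h₁ (fun v h₂ h₁ => hdisj v h₁ h₂)
      hs₂ hs₁ ht₂ ht₁ σ₂ hsσ₂ hσ₂t hσ₂ hlast₂ σ₁ hsσ₁ hσ₁t hσ₁ hlast₁ (by omega)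
    exact ⟨τ, hsτ, hτt, S, hSQ, fun v hv => (hS v hv).symm, hcard⟩
  obtain ⟨τ, hστ, hτt, S, hSQ, hS, hcard⟩ := h₂ σ₂ t hσ₂t hσ₂ ht₂
  have hσ₂τ : σ₂ < τ := by
    refine lt_of_le_of_ne hστ ?_
    rintro rfl
    obtain ⟨v, hv⟩ := Finset.card_pos.mp (by omega : 0 < S.card)
    exact hσ₂ v (hSQ hv) (hS v hv)
  obtain ⟨w, hwQ, hw⟩ : ∃ w ∈ Q τ, T.IsBelow w y₁ := by
    by_contra! h
    exact hlast₁ τ (by omega) hτt h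
  refine ⟨τ, by omega, hτt, insert w S, Finset.insert_subset hwQ hSQ, ?_, ?_⟩
  · simp only [Finset.mem_insert, forall_eq_or_imp]
    exact ⟨.inl hw, fun v hv => .inr (hS v hv)⟩
  · rw [Finset.card_insert_of_notMem fun hwS => hdisj w hw (hS w hwS)]
    omega

theorem IsRun.exists_children_mem {x : V} (hQ : T.IsRun Q) {s t : ℕ} (hst : s ≤ t)
    (hs : ∀ v ∈ Q s, ¬ T.IsBelow v x) (ht : x ∈ Q t) :
    ∃ r, s ≤ r ∧ r < t ∧ x ∈ Q (r + 1) ∧ (∀ u, u ≠ x → (u ∈ Q r ↔ u ∈ Q (r + 1))) ∧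
      ∀ u, u ≠ x → T.parent u = x → u ∈ Q r := by
  obtain ⟨r, hsr, hrt, hfirst, hr⟩ := Nat.exists_first_of_le (p := (x ∈ Q ·)) hst
    (fun h => hs x h (IsBelow.refl x)) ht
  exact ⟨r, hsr, hrt, hr, hQ.mem_of_flip (iff_of_false (hfirst r hsr le_rfl) (not_not_intro hr))⟩

theorem IsRun.costsAtLeast_three (hQ : T.IsRun Q) {x y₁ y₂ : V} (hf : T.IsFork x y₁ y₂) :
    T.CostsAtLeast Q x 3 := by
  intro s t hst hs ht
  obtain ⟨r, hsr, hrt, hx, hkeep, hch⟩ := hQ.exists_children_mem hst hs ht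
  refine ⟨r + 1, by omega, hrt, {x, y₁, y₂}, ?_, ?_, ?_⟩
  · simp only [Finset.insert_subset_iff, Finset.singleton_subset_iff]
    exact ⟨hx, (hkeep _ hf.left_ne).mp (hch _ hf.left_ne hf.parent_left),
      (hkeep _ hf.right_ne).mp (hch _ hf.right_ne hf.parent_right)⟩
  · simp only [Finset.mem_insert, Finset.mem_singleton, forall_eq_or_imp, forall_eq]
    exact ⟨.refl x, (IsBelow.refl y₁).trans_parent hf.parent_left,
      (IsBelow.refl y₂).trans_parent hf.parent_right⟩
  · rw [Finset.card_eq_three.mpr ⟨x, y₁, y₂, hf.left_ne.symm, hf.right_ne.symm,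
      hf.left_ne_right, rfl⟩]

theorem IsRun.costsAtLeast_succ (hQ : T.IsRun Q) {x y₁ y₂ : V} (hf : T.IsFork x y₁ y₂) {n : ℕ}
    (hn : 1 ≤ n) (h₁ : T.CostsAtLeast Q y₁ n) (h₂ : T.CostsAtLeast Q y₂ n) :
    T.CostsAtLeast Q x (n + 1) := by
  intro s t hst hs ht
  obtain ⟨r, hsr, hrt, -, -, hch⟩ := hQ.exists_children_mem hst hs ht
  obtain ⟨τ, hsτ, hτr, S, hSQ, hS, hcard⟩ := exists_card_ge_of_siblings h₁ h₂ hn hf.disjoint hsr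
    (fun v hv hb => hs v hv (hb.trans_parent hf.parent_left))
    (fun v hv hb => hs v hv (hb.trans_parent hf.parent_right))
    (hch _ hf.left_ne hf.parent_left) (hch _ hf.right_ne hf.parent_right)
  exact ⟨τ, hsτ, by omega, S, hSQ, fun v hv => (hS v hv).elim
    (·.trans_parent hf.parent_left) (·.trans_parent hf.parent_right), hcard⟩

theorem IsRun.exists_card_ge (hQ : T.IsRun Q) (hroot : T.parent T.root = T.root) {c₁ c₂ : V}
    (hf : T.IsFork T.root c₁ c₂) {n : ℕ} (hn : 1 ≤ n) (h₁ : T.CostsAtLeast Q c₁ n)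
    (h₂ : T.CostsAtLeast Q c₂ n) (h0 : Q 0 = {T.root}) {t : ℕ} (ht : T.root ∉ Q t) :
    ∃ τ, n + 2 ≤ (Q τ).card := by
  obtain ⟨r, -, -, hfirst, hr⟩ := Nat.exists_first_of_le (p := (T.root ∉ Q ·)) (Nat.zero_le t)
    (by simp [h0]) ht
  have hroot_mem : ∀ i ≤ r, T.root ∈ Q i := fun i hi => not_not.mp (hfirst i (Nat.zero_le i) hi)
  obtain ⟨-, hch⟩ := hQ.mem_of_flip (iff_of_true (hroot_mem r le_rfl) hr)
  have hempty : ∀ c, c ≠ T.root → ∀ v ∈ Q 0, ¬ T.IsBelow v c := by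
    intro c hc v hv
    rw [h0, Finset.mem_singleton] at hv
    exact hv ▸ not_isBelow_root hroot hc
  obtain ⟨τ, -, hτr, S, hSQ, hS, hcard⟩ := exists_card_ge_of_siblings h₁ h₂ hn hf.disjoint
    (Nat.zero_le r) (hempty c₁ hf.left_ne) (hempty c₂ hf.right_ne)
    (hch _ hf.left_ne hf.parent_left) (hch _ hf.right_ne hf.parent_right)
  have hrootS : T.root ∉ S := fun h => (hS _ h).elim
    (not_isBelow_root hroot hf.left_ne) (not_isBelow_root hroot hf.right_ne)
  refine ⟨τ, ?_⟩
  calc n + 2 ≤ (insert T.root S).card := by rw [Finset.card_insert_of_notMem hrootS]; omega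
    _ ≤ (Q τ).card := Finset.card_le_card (Finset.insert_subset (hroot_mem τ hτr) hSQ)

end PebSys

section Pebblings

variable {V : Type}

theorem card_le_pebSpace {L : List (Finset V)} {P : Finset V} (hP : P ∈ L) :
    P.card ≤ pebSpace L :=
  List.le_max_of_le' 0 (List.mem_map_of_mem hP) le_rfl

theorem card_getD_reverse_le_pebSpace (L : List (Finset V)) (i : ℕ) :
    (L.reverse.getD i ∅).card ≤ pebSpace L := by
  rcases lt_or_ge i L.reverse.length with hi | hi
  · rw [List.getD_eq_getElem _ _ hi]
    exact card_le_pebSpace (List.mem_reverse.mp (List.getElem_mem hi))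
  · rw [List.getD_eq_default _ _ hi, Finset.card_empty]
    exact Nat.zero_le _

variable [DecidableEq V] {T : PebSys V}

theorem IsPebbling.isRun_getD_reverse {L : List (Finset V)} (hL : IsPebbling T L) :
    T.IsRun (L.reverse.getD · ∅) := by
  obtain ⟨hhead, -, hchain⟩ := hL
  have hchain' : L.reverse.IsChain (PebStep T) :=
    List.isChain_reverse.mpr (hchain.imp fun _ _ => PebStep.symm)
  intro i
  beta_reduce
  rcases lt_or_ge (i + 1) L.reverse.length with hi | hi
  · right
    rw [List.getD_eq_getElem _ _ hi, List.getD_eq_getElem _ _ (by omega)]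
    exact List.isChain_iff_getElem.mp hchain' i hi
  · left
    rw [List.getD_eq_default _ _ hi]
    rcases lt_or_ge i L.reverse.length with hi' | hi'
    · rw [List.getD_eq_getElem _ _ hi', List.getElem_reverse]
      simp only [List.length_reverse] at hi hi'
      rw [List.head?_eq_getElem?] at hhead
      simp only [show L.length - 1 - i = 0 by omega]
      simpa [List.getElem?_eq_getElem (show 0 < L.length by omega)] using hhead
    · exact List.getD_eq_default _ _ hi'

theorem IsPebbling.le_pebSpace (hroot : T.parent T.root = T.root) {c₁ c₂ : V}
    (hf : T.IsFork T.root c₁ c₂) {n : ℕ} (hn : 1 ≤ n)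
    (hc : ∀ Q, T.IsRun Q → T.CostsAtLeast Q c₁ n ∧ T.CostsAtLeast Q c₂ n)
    {L : List (Finset V)} (hL : IsPebbling T L) : n + 2 ≤ pebSpace L := by
  have hQ := hL.isRun_getD_reverse
  have h0 : L.reverse.getD 0 ∅ = {T.root} := by
    rw [List.getD_eq_getElem?_getD, ← List.head?_eq_getElem?, List.head?_reverse, hL.2.1]
    rfl
  obtain ⟨τ, hτ⟩ := hQ.exists_card_ge hroot hf hn (hc _ hQ).1 (hc _ hQ).2 h0
    (t := L.length) (by simp)
  exact hτ.trans (card_getD_reverse_le_pebSpace L τ)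

theorem exists_isPebbling_of_reflTransGen (h : Relation.ReflTransGen (PebStep T) ∅ {T.root}) :
    ∃ L, IsPebbling T L := by
  obtain ⟨l, hl, hlast⟩ := List.exists_isChain_cons_of_relationReflTransGen h
  exact ⟨∅ :: l, rfl, by rw [List.getLast?_eq_getLast_of_ne_nil (List.cons_ne_nil _ _), hlast], hl⟩

theorem le_revNum {k : ℕ} (hex : ∃ L, IsPebbling T L)
    (hk : ∀ L, IsPebbling T L → k ≤ pebSpace L) : k ≤ revNum T := by
  obtain ⟨L, hL⟩ := hex
  exact le_csInf ⟨_, L, hL, le_rfl⟩ fun _ ⟨L, hL, hle⟩ => (hk L hL).trans hle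

end Pebblings

theorem PebStep.of_insert_of_parent_lt {n : ℕ} {T : PebSys (Fin n)}
    (hlt : ∀ u, T.parent u ≠ u → T.parent u < u) {P : Finset (Fin n)} {v : Fin n} (hv : v ∉ P)
    (hP : ∀ u, v < u → u ∈ P) : PebStep T P (insert v P) :=
  PebStep.of_insert hv fun u hu hpar => hP u (hpar ▸ hlt u (hpar ▸ Ne.symm hu))

theorem reflTransGen_empty_root_of_parent_lt {n : ℕ} {T : PebSys (Fin n)}
    (hlt : ∀ u, T.parent u ≠ u → T.parent u < u) :
    Relation.ReflTransGen (PebStep T) ∅ {T.root} := by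
  -- pebble all vertices from the last to the first, then unpebble all but the root from the
  -- first to the last
  let up (m : ℕ) : Finset (Fin n) := {v | m ≤ v.val}
  let down (m : ℕ) : Finset (Fin n) := {v | v = T.root ∨ m ≤ v.val}
  have hup : ∀ m ≤ n, Relation.ReflTransGen (PebStep T) (up m) (up 0) := by
    intro m hm
    induction m with
    | zero => exact .refl
    | succ m ih =>
      have hins : up m = insert ⟨m, by omega⟩ (up (m + 1)) := by
        ext v
        simp only [up, Finset.mem_insert, Finset.mem_filter, Finset.mem_univ, true_and,
          Fin.ext_iff]
        omega
      refine .head ?_ (ih (by omega))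
      rw [hins]
      exact PebStep.of_insert_of_parent_lt hlt (by simp [up]) fun u hu => by
        simp only [up, Finset.mem_filter, Finset.mem_univ, true_and]
        exact hu
  have hdown : ∀ m ≤ n, Relation.ReflTransGen (PebStep T) (down 0) (down m) := by
    intro m hm
    induction m with
    | zero => exact .refl
    | succ m ih =>
      have hins : down m = insert ⟨m, by omega⟩ (down (m + 1)) := by
        ext v
        simp only [down, Finset.mem_insert, Finset.mem_filter, Finset.mem_univ, true_and,
          Fin.ext_iff]
        omega
      by_cases hroot : (⟨m, by omega⟩ : Fin n) = T.root
      · rw [hins, hroot, Finset.insert_eq_of_mem (by simp [down])] at ih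
        exact ih (by omega)
      refine (ih (by omega)).tail ?_
      rw [hins]
      refine (PebStep.of_insert_of_parent_lt hlt (by simp [down, hroot]) fun u hu => ?_).symm
      simp only [down, Finset.mem_filter, Finset.mem_univ, true_and]
      exact .inr hu
  have h₁ : up n = ∅ := by
    ext v
    simp [up, v.isLt]
  have h₂ : up 0 = down 0 := by
    ext v
    simp [up, down]
  have h₃ : down n = {T.root} := by
    ext v
    simp [down, v.isLt]
  rw [← h₁, ← h₃]
  exact (hup n le_rfl).trans (h₂ ▸ hdown n le_rfl)

namespace BtSys

variable {h : ℕ} {hpos : 0 < 2 ^ h - 1}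

theorem parent_val (u : Fin (2 ^ h - 1)) : ((BtSys h hpos).parent u).val = (u.val - 1) / 2 := rfl

theorem parent_root : (BtSys h hpos).parent (BtSys h hpos).root = (BtSys h hpos).root :=
  Fin.ext (by rw [parent_val]; simp [BtSys])

theorem parent_le (u : Fin (2 ^ h - 1)) : (BtSys h hpos).parent u ≤ u := by
  rw [Fin.le_def, parent_val]
  omega

theorem parent_lt (u : Fin (2 ^ h - 1)) (hu : (BtSys h hpos).parent u ≠ u) :
    (BtSys h hpos).parent u < u := by
  rw [Ne, Fin.ext_iff, parent_val] at hu
  rw [Fin.lt_def, parent_val]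
  omega

theorem isFork (x : Fin (2 ^ h - 1)) (hx : 2 * x.val + 2 < 2 ^ h - 1) :
    (BtSys h hpos).IsFork x ⟨2 * x.val + 1, by omega⟩ ⟨2 * x.val + 2, hx⟩ := by
  have hpl : (BtSys h hpos).parent ⟨2 * x.val + 1, by omega⟩ = x := by
    ext; simp only [parent_val]; omega
  have hpr : (BtSys h hpos).parent ⟨2 * x.val + 2, hx⟩ = x := by
    ext; simp only [parent_val]; omega
  have hnot : ∀ y : Fin (2 ^ h - 1), x < y → ¬ (BtSys h hpos).IsBelow x y :=
    fun y hxy hb => (hb.le parent_le).not_gt hxy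
  refine ⟨hpl, hpr, by simp [Fin.ext_iff]; omega, by simp [Fin.ext_iff]; omega, fun v => ?_⟩
  exact PebSys.not_isBelow_of_siblings (by simp [Fin.ext_iff]) hpl hpr
    (hnot _ (by simp [Fin.lt_def]; omega)) (hnot _ (by simp [Fin.lt_def]; omega))

theorem two_mul_add_two_lt {j : ℕ} (hj : 2 ≤ j) {x : Fin (2 ^ h - 1)}
    (hx : x.val + 1 < 2 ^ (h + 1 - j)) : 2 * x.val + 2 < 2 ^ h - 1 := by
  have hjh : h + 1 - j + 1 ≤ h := by
    by_contra!
    rw [show h + 1 - j = 0 by omega, pow_zero] at hx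
    omega
  have := Nat.pow_le_pow_right two_pos hjh
  rw [pow_succ] at this
  omega

-- In heap order, the subtree of `x` has height at least `j` iff `x + 1 < 2 ^ (h + 1 - j)`.
theorem costsAtLeast {Q : ℕ → Finset (Fin (2 ^ h - 1))} (hQ : (BtSys h hpos).IsRun Q) (j : ℕ)
    (hj : 2 ≤ j) (x : Fin (2 ^ h - 1)) (hx : x.val + 1 < 2 ^ (h + 1 - j)) :
    (BtSys h hpos).CostsAtLeast Q x (j + 1) := by
  induction j, hj using Nat.le_induction generalizing x with
  | base => exact hQ.costsAtLeast_three (isFork x (two_mul_add_two_lt le_rfl hx))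
  | succ j hj ih =>
    have hchild : ∀ c, c ≤ 2 * x.val + 2 → c + 1 < 2 ^ (h + 1 - j) := by
      have hjh : h + 1 - j = h + 1 - (j + 1) + 1 := by
        by_contra!
        rw [show h + 1 - (j + 1) = 0 by omega, pow_zero] at hx
        omega
      rw [hjh, pow_succ]
      omega
    exact hQ.costsAtLeast_succ (isFork x (two_mul_add_two_lt (by omega) hx)) (by omega)
      (ih _ (hchild (2 * x.val + 1) (by omega))) (ih _ (hchild (2 * x.val + 2) le_rfl))

end BtSys

/-- For every integer `h ≥ 3`, `rev(Bt_h) ≥ h + 2`. -/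
theorem rev_bt_ge_height_add_two (h : ℕ) (hh : 3 ≤ h) :
    h + 2 ≤ revNum (BtSys h
      (by have : 1 < 2 ^ h := Nat.one_lt_two_pow_iff.mpr (by omega); omega)) := by
  generalize_proofs hpos
  obtain ⟨k, rfl⟩ : ∃ k, h = k + 1 := ⟨h - 1, by omega⟩
  have h8 : 2 ^ 3 ≤ 2 ^ (k + 1) := Nat.pow_le_pow_right two_pos hh
  have hf := BtSys.isFork (hpos := hpos) (BtSys (k + 1) hpos).root (by simp [BtSys]; omega)
  have hk : k + 1 + 1 - k = 2 := by omega
  refine le_revNum (exists_isPebbling_of_reflTransGen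
    (reflTransGen_empty_root_of_parent_lt BtSys.parent_lt)) fun L hL => ?_
  refine hL.le_pebSpace BtSys.parent_root hf (by omega) fun Q hQ =>
    ⟨BtSys.costsAtLeast hQ k (by omega) _ ?_, BtSys.costsAtLeast hQ k (by omega) _ ?_⟩ <;>
    simp [BtSys, hk]
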